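/- arXiv:0903.3071 — 2 statements merged into one kernel-verified Lean document; each statement's English description precedes it below -/
import Mathlib

section
/- For all x > 0, 1/x + 1/(2x²) + 1/(6x³) − 1/(30x⁵) < ψ'(x) < 1/x + 1/(2x²) + 1/(6x³), where ψ' is the trigamma function. -/
/-!
Differentiating Euler's limit `log Γ(x) = lim (x log n + log n! - ∑_{m ≤ n} log (x + m))`, whose
derivatives converge locally uniformly on `x > 0`, gives
`ψ(x) = -γ - 1/x + ∑ₘ (1/(m+1) - 1/(x+m+1))`, and differentiating this series termwise gives
`ψ'(x) = ∑ₙ 1/(x+n)²`.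

The bounds truncate the asymptotic expansion `ψ'(x) ~ 1/x + 1/(2x²) + ∑ₖ B₂ₖ / x^(2k+1)`.
Both `F(t) = 1/t + 1/(2t²) + 1/(6t³)` and `G(t) = F(t) - 1/(30t⁵)` tend to `0` at infinity, and
`F(t) - F(t+1) = 1/t² + 1/(6t³(t+1)³) > 1/t² > G(t) - G(t+1)`, so telescoping along `t = x + n`
gives `G(x) < ψ'(x) < F(x)`.
-/

open Real Filter Topology Finset

noncomputable def psi : ℝ → ℝ := deriv (fun x => Real.log (Real.Gamma x))

theorem hasDerivAt_logGammaSeq {x : ℝ} (hx : 0 < x) (n : ℕ) :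
    HasDerivAt (BohrMollerup.logGammaSeq · n) (log n - ∑ m ∈ range (n + 1), (x + m)⁻¹) x := by
  have hsum : HasDerivAt (fun y => ∑ m ∈ range (n + 1), log (y + m))
      (∑ m ∈ range (n + 1), (x + m)⁻¹) x :=
    HasDerivAt.fun_sum fun m _ => by
      simpa using ((hasDerivAt_id x).add_const (m : ℝ)).log (by positivity)
  exact (((hasDerivAt_mul_const (log n)).add_const _).sub hsum).congr_deriv (by ring)

theorem norm_inv_sub_inv_add_le {x : ℝ} (hx : 0 ≤ x) (m : ℕ) :
    ‖((m : ℝ) + 1)⁻¹ - (x + (m + 1))⁻¹‖ ≤ x * (((m : ℝ) + 1) ^ 2)⁻¹ := by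
  have hm : (0 : ℝ) < m + 1 := by positivity
  rw [inv_sub_inv hm.ne' (by positivity), add_sub_cancel_right, Real.norm_of_nonneg (by positivity),
    div_eq_mul_inv, sq]
  gcongr x * (_ * ?_)⁻¹
  linarith

noncomputable def digammaSeries (x : ℝ) : ℝ :=
  -eulerMascheroniConstant - x⁻¹ + ∑' m : ℕ, (((m : ℝ) + 1)⁻¹ - (x + (m + 1))⁻¹)

theorem summable_inv_add_one_sq : Summable fun m : ℕ => (((m : ℝ) + 1) ^ 2)⁻¹ := by
  simpa using (summable_nat_add_iff 1).2 (summable_nat_pow_inv.2 one_lt_two)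

theorem log_sub_sum_inv_eq (x : ℝ) (n : ℕ) :
    log n - ∑ m ∈ range (n + 1), (x + m)⁻¹ = (log n - harmonic n) - x⁻¹ +
      ∑ m ∈ range n, (((m : ℝ) + 1)⁻¹ - (x + (m + 1))⁻¹) := by
  rw [sum_range_succ', sum_sub_distrib, harmonic]
  push_cast
  ring

theorem tendstoUniformlyOn_digammaSeries (b : ℝ) :
    TendstoUniformlyOn (fun (n : ℕ) (x : ℝ) => log n - ∑ m ∈ range (n + 1), (x + m)⁻¹)
      digammaSeries atTop (Set.Ioo 0 b) := by
  have hconst : TendstoUniformlyOn (fun (n : ℕ) (_ : ℝ) => log n - harmonic n)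
      (fun _ => -eulerMascheroniConstant) atTop (Set.Ioo 0 b) := by
    refine Tendsto.tendstoUniformlyOn_const ?_ _
    simpa using tendsto_harmonic_sub_log.neg
  have hinv : TendstoUniformlyOn (fun (_ : ℕ) (x : ℝ) => -x⁻¹) (fun x => -x⁻¹) atTop
      (Set.Ioo 0 b) :=
    fun u hu => Eventually.of_forall fun _ _ _ => refl_mem_uniformity hu
  have hseries := tendstoUniformlyOn_tsum_nat (summable_inv_add_one_sq.mul_left b)
    fun m x (hx : x ∈ Set.Ioo 0 b) => (norm_inv_sub_inv_add_le hx.1.le m).trans <|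
      mul_le_mul_of_nonneg_right hx.2.le (by positivity)
  refine ((hconst.add hinv).add hseries).congr_right ?_ |>.congr ?_
  · exact fun x _ => by simp only [Pi.add_apply, digammaSeries]; ring
  · exact Eventually.of_forall fun n x _ => by
      simp only [Pi.add_apply, log_sub_sum_inv_eq]; ring

theorem tendstoLocallyUniformlyOn_digammaSeries :
    TendstoLocallyUniformlyOn (fun (n : ℕ) (x : ℝ) => log n - ∑ m ∈ range (n + 1), (x + m)⁻¹)
      digammaSeries atTop (Set.Ioi 0) := fun u hu x hx =>
  ⟨Set.Ioo 0 (x + 1), mem_nhdsWithin_of_mem_nhds (Ioo_mem_nhds hx (lt_add_one x)),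
    tendstoUniformlyOn_digammaSeries (x + 1) u hu⟩

theorem hasDerivAt_log_Gamma {x : ℝ} (hx : 0 < x) :
    HasDerivAt (fun y => log (Gamma y)) (digammaSeries x) x :=
  hasDerivAt_of_tendstoLocallyUniformlyOn isOpen_Ioi tendstoLocallyUniformlyOn_digammaSeries
    (Eventually.of_forall fun n _ hy => hasDerivAt_logGammaSeq hy n)
    (fun _ hy => BohrMollerup.tendsto_log_gamma hy) hx

theorem summable_inv_add_sq {x : ℝ} (hx : 0 < x) : Summable fun n : ℕ => ((x + n) ^ 2)⁻¹ := by
  refine (summable_nat_add_iff 1).1 <| summable_inv_add_one_sq.of_nonneg_of_le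
    (fun _ => by positivity) fun n => ?_
  push_cast
  gcongr (?_ ^ 2)⁻¹
  linarith

theorem hasDerivAt_digammaSeries {x : ℝ} (hx : 0 < x) :
    HasDerivAt digammaSeries (∑' n : ℕ, ((x + n) ^ 2)⁻¹) x := by
  have hterm : ∀ (m : ℕ) (y : ℝ), y ∈ Set.Ioi 0 → HasDerivAt
      (fun z : ℝ => ((m : ℝ) + 1)⁻¹ - (z + (m + 1))⁻¹) ((y + (m + 1)) ^ 2)⁻¹ y :=
    fun m y (hy : 0 < y) => by
      simpa [neg_div] using (((hasDerivAt_id y).add_const ((m : ℝ) + 1)).inv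
        (by positivity)).const_sub ((m : ℝ) + 1)⁻¹
  have hbound : ∀ (m : ℕ) (y : ℝ), y ∈ Set.Ioi 0 →
      ‖((y + (m + 1)) ^ 2)⁻¹‖ ≤ (((m : ℝ) + 1) ^ 2)⁻¹ := fun m y (hy : 0 < y) => by
    rw [Real.norm_of_nonneg (by positivity)]
    gcongr (?_ ^ 2)⁻¹
    linarith
  have hseries := hasDerivAt_tsum_of_isPreconnected summable_inv_add_one_sq isOpen_Ioi
    isPreconnected_Ioi hterm hbound hx
    (Summable.of_norm_bounded (summable_inv_add_one_sq.mul_left x) (norm_inv_sub_inv_add_le hx.le))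
    hx
  refine (((hasDerivAt_inv hx.ne').const_sub _).add hseries).congr_deriv ?_
  rw [(summable_inv_add_sq hx).tsum_eq_zero_add]
  push_cast
  simp only [neg_neg, add_zero]

theorem hasSum_deriv_psi {x : ℝ} (hx : 0 < x) :
    HasSum (fun n : ℕ => 1 / (x + n) ^ 2) (deriv psi x) := by
  have hpsi : psi =ᶠ[𝓝 x] digammaSeries :=
    eventually_of_mem (isOpen_Ioi.mem_nhds hx) fun y hy => (hasDerivAt_log_Gamma hy).deriv
  rw [hpsi.deriv_eq, (hasDerivAt_digammaSeries hx).deriv]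
  simpa only [one_div] using (summable_inv_add_sq hx).hasSum

theorem hasSum_sub_add_one_of_antitoneOn {φ : ℝ → ℝ} {x : ℝ} (hφ : AntitoneOn φ (Set.Ici x))
    (hlim : Tendsto φ atTop (𝓝 0)) :
    HasSum (fun n : ℕ => φ (x + n) - φ (x + n + 1)) (φ x) := by
  have hle : ∀ n : ℕ, x ≤ x + n := fun n => le_add_of_nonneg_right n.cast_nonneg
  rw [hasSum_iff_tendsto_nat_of_nonneg fun n => sub_nonneg.2 <|
    hφ (hle n) ((hle n).trans (le_add_of_nonneg_right zero_le_one)) (by linarith)]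
  have hseq : Tendsto (fun n : ℕ => φ (x + n)) atTop (𝓝 0) :=
    hlim.comp (tendsto_atTop_add_const_left _ x tendsto_natCast_atTop_atTop)
  have hpartial : ∀ n : ℕ, ∑ i ∈ range n, (φ (x + i) - φ (x + i + 1)) = φ x - φ (x + n) :=
    fun n => by simpa [add_assoc] using sum_range_sub' (fun i : ℕ => φ (x + i)) n
  simpa only [hpartial, sub_zero] using tendsto_const_nhds.sub hseq

theorem tendsto_one_div_mul_pow_atTop {c : ℝ} (hc : 0 < c) {k : ℕ} (hk : k ≠ 0) :
    Tendsto (fun t : ℝ => 1 / (c * t ^ k)) atTop (𝓝 0) :=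
  tendsto_const_nhds.div_atTop ((tendsto_pow_atTop hk).const_mul_atTop hc)

theorem antitoneOn_one_div_mul_pow {c : ℝ} (hc : 0 < c) (k : ℕ) :
    AntitoneOn (fun t : ℝ => 1 / (c * t ^ k)) (Set.Ioi 0) := by
  intro a (ha : 0 < a) b _ hab
  dsimp only
  gcongr

noncomputable def trigammaUpper (t : ℝ) : ℝ := 1 / t + 1 / (2 * t ^ 2) + 1 / (6 * t ^ 3)

theorem antitoneOn_trigammaUpper : AntitoneOn trigammaUpper (Set.Ioi 0) := by
  intro a (ha : 0 < a) b _ hab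
  unfold trigammaUpper
  gcongr

theorem tendsto_trigammaUpper_atTop : Tendsto trigammaUpper atTop (𝓝 0) := by
  have h := (tendsto_inv_atTop_zero.add (tendsto_one_div_mul_pow_atTop two_pos two_ne_zero)).add
    (tendsto_one_div_mul_pow_atTop (by norm_num : (0 : ℝ) < 6) three_ne_zero)
  rw [add_zero, add_zero] at h
  exact h.congr fun t => by rw [trigammaUpper, one_div t]

theorem one_div_sq_lt_trigammaUpper_sub {t : ℝ} (ht : 0 < t) :
    1 / t ^ 2 < trigammaUpper t - trigammaUpper (t + 1) := by
  have h : trigammaUpper t - trigammaUpper (t + 1) = 1 / t ^ 2 + 1 / (6 * t ^ 3 * (t + 1) ^ 3) := by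
    unfold trigammaUpper
    field_simp
    ring
  rw [h]
  exact lt_add_of_pos_right _ (by positivity)

theorem trigammaUpper_sub_sub_lt_one_div_sq {t : ℝ} (ht : 0 < t) :
    trigammaUpper t - trigammaUpper (t + 1) - (1 / (30 * t ^ 5) - 1 / (30 * (t + 1) ^ 5)) <
      1 / t ^ 2 := by
  have h : trigammaUpper t - trigammaUpper (t + 1) - (1 / (30 * t ^ 5) - 1 / (30 * (t + 1) ^ 5)) =
      1 / t ^ 2 - (5 * t ^ 2 + 5 * t + 1) / (30 * t ^ 5 * (t + 1) ^ 5) := by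
    unfold trigammaUpper
    field_simp
    ring
  rw [h]
  exact sub_lt_self _ (by positivity)

theorem trigamma_bounds (x : ℝ) (hx : 0 < x) :
    1 / x + 1 / (2 * x ^ 2) + 1 / (6 * x ^ 3) - 1 / (30 * x ^ 5) < deriv psi x ∧
    deriv psi x < 1 / x + 1 / (2 * x ^ 2) + 1 / (6 * x ^ 3) := by
  have hpos : ∀ n : ℕ, 0 < x + n := fun n => by positivity
  have hIci : Set.Ici x ⊆ Set.Ioi 0 := Set.Ici_subset_Ioi.2 hx
  have hψ := hasSum_deriv_psi hx
  have hupper := hasSum_sub_add_one_of_antitoneOn (antitoneOn_trigammaUpper.mono hIci)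
    tendsto_trigammaUpper_atTop
  have hcorr := hasSum_sub_add_one_of_antitoneOn
    ((antitoneOn_one_div_mul_pow (by norm_num : (0 : ℝ) < 30) 5).mono hIci)
    (tendsto_one_div_mul_pow_atTop (by norm_num) (by norm_num))
  constructor
  · exact hasSum_lt (hf := hupper.sub hcorr) (hg := hψ)
      (fun n => (trigammaUpper_sub_sub_lt_one_div_sq (hpos n)).le)
      (trigammaUpper_sub_sub_lt_one_div_sq (hpos 0))
  · exact hasSum_lt (hf := hψ) (hg := hupper)
      (fun n => (one_div_sq_lt_trigammaUpper_sub (hpos n)).le)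
      (one_div_sq_lt_trigammaUpper_sub (hpos 0))
end

section
/- For all x > 0, −1/x² − 1/x³ − 1/(2x⁴) < ψ''(x) < −1/x² − 1/x³, where ψ'' is the tetragamma function. -/
open Real Filter Set Topology

lemma summable_inv_add_pow {x : ℝ} (hx : 0 < x) {p : ℕ} (hp : 1 < p) :
    Summable fun k : ℕ => ((x + k) ^ p)⁻¹ := by
  refine ((summable_one_div_nat_add_rpow x p).2 (mod_cast hp)).congr fun k => ?_
  rw [abs_of_pos (by positivity), rpow_natCast, one_div, add_comm]

lemma tendsto_inv_add_pow (x : ℝ) {p : ℕ} (hp : p ≠ 0) :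
    Tendsto (fun k : ℕ => ((x + k) ^ p)⁻¹) atTop (𝓝 0) :=
  ((tendsto_pow_atTop hp).comp
    (tendsto_atTop_add_const_left _ x tendsto_natCast_atTop_atTop)).inv_tendsto_atTop

lemma hasDerivAt_inv_add_sq {y : ℝ} (a : ℝ) (h : y + a ≠ 0) :
    HasDerivAt (fun y => ((y + a) ^ 2)⁻¹) (-(2 * ((y + a) ^ 3)⁻¹)) y := by
  refine ((((hasDerivAt_id' y).add_const a).fun_pow 2).fun_inv (pow_ne_zero 2 h)).congr_deriv ?_
  field_simp
  ring

section TermwiseDeriv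

variable {g g' : ℕ → ℝ → ℝ} {p : ℕ} {c y₀ x : ℝ}

lemma norm_le_of_abs_le_inv_add_pow (hg' : ∀ k y, 0 < y → |g' k y| ≤ c * ((y + k) ^ p)⁻¹)
    {r : ℝ} (hr : 0 < r) (k : ℕ) {y : ℝ} (hy : y ∈ Ioi r) :
    ‖g' k y‖ ≤ c * ((r + k) ^ p)⁻¹ := by
  have hy₀ : 0 < y := hr.trans hy
  have hc : 0 ≤ c := nonneg_of_mul_nonneg_left ((abs_nonneg _).trans (hg' k y hy₀))
    (by positivity)
  calc ‖g' k y‖ ≤ c * ((y + k) ^ p)⁻¹ := hg' k y hy₀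
    _ ≤ c * ((r + k) ^ p)⁻¹ := by gcongr; exact (mem_Ioi.1 hy).le

lemma summable_of_abs_deriv_le_inv_add_pow (hp : 1 < p)
    (hg : ∀ k y, 0 < y → HasDerivAt (g k) (g' k y) y)
    (hg' : ∀ k y, 0 < y → |g' k y| ≤ c * ((y + k) ^ p)⁻¹)
    (hy₀ : 0 < y₀) (h₀ : Summable fun k => g k y₀) (hx : 0 < x) :
    Summable fun k => g k x := by
  have hr : 0 < min x y₀ / 2 := by positivity
  exact summable_of_summable_hasDerivAt_of_isPreconnected
    ((summable_inv_add_pow hr hp).mul_left c) isOpen_Ioi isPreconnected_Ioi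
    (fun k y hy => hg k y (hr.trans hy)) (fun k y => norm_le_of_abs_le_inv_add_pow hg' hr k)
    (mem_Ioi.2 (by linarith [min_le_right x y₀])) h₀ (mem_Ioi.2 (by linarith [min_le_left x y₀]))

lemma hasDerivAt_tsum_of_abs_deriv_le_inv_add_pow (hp : 1 < p)
    (hg : ∀ k y, 0 < y → HasDerivAt (g k) (g' k y) y)
    (hg' : ∀ k y, 0 < y → |g' k y| ≤ c * ((y + k) ^ p)⁻¹)
    (hy₀ : 0 < y₀) (h₀ : Summable fun k => g k y₀) (hx : 0 < x) :
    HasDerivAt (fun y => ∑' k, g k y) (∑' k, g' k x) x := by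
  have hr : 0 < min x y₀ / 2 := by positivity
  exact hasDerivAt_tsum_of_isPreconnected
    ((summable_inv_add_pow hr hp).mul_left c) isOpen_Ioi isPreconnected_Ioi
    (fun k y hy => hg k y (hr.trans hy)) (fun k y => norm_le_of_abs_le_inv_add_pow hg' hr k)
    (mem_Ioi.2 (by linarith [min_le_right x y₀])) h₀ (mem_Ioi.2 (by linarith [min_le_left x y₀]))

end TermwiseDeriv

lemma lt_tsum_of_sub_succ_lt {u a : ℕ → ℝ} (hu : Tendsto u atTop (𝓝 0)) (ha : Summable a)
    (h : ∀ k, u k - u (k + 1) < a k) : u 0 < ∑' k, a k := by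
  set d := fun k => a k - (u k - u (k + 1))
  have hd : Tendsto (fun n => ∑ k ∈ Finset.range n, d k) atTop (𝓝 (∑' k, a k - (u 0 - 0))) := by
    refine (ha.hasSum.tendsto_sum_nat.sub (tendsto_const_nhds.sub hu)).congr fun n => ?_
    rw [Finset.sum_sub_distrib, Finset.sum_range_sub']
  have hd₀ : d 0 ≤ ∑' k, a k - u 0 := by
    rw [sub_zero] at hd
    refine ge_of_tendsto hd (eventually_atTop.2 ⟨1, fun n hn => ?_⟩)
    exact Finset.single_le_sum (fun k _ => (sub_pos.2 (h k)).le) (Finset.mem_range.2 hn)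
  linarith [sub_pos.2 (h 0)]

lemma tsum_lt_of_lt_sub_succ {u a : ℕ → ℝ} (hu : Tendsto u atTop (𝓝 0)) (ha : Summable a)
    (h : ∀ k, a k < u k - u (k + 1)) : ∑' k, a k < u 0 := by
  have := lt_tsum_of_sub_succ_lt (u := fun k => -u k) (a := fun k => -a k)
    (by simpa using hu.neg) ha.neg fun k => by linarith [h k]
  rw [tsum_neg] at this
  linarith

lemma differentiableAt_log_Gamma {x : ℝ} (hx : 0 < x) :
    DifferentiableAt ℝ (fun y => log (Gamma y)) x :=
  (differentiableAt_Gamma fun m => by linarith [(m.cast_nonneg : (0 : ℝ) ≤ m)]).log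
    (Gamma_pos_of_pos hx).ne'

lemma log_Gamma_add_one {x : ℝ} (hx : 0 < x) : log (Gamma (x + 1)) = log (Gamma x) + log x := by
  rw [Gamma_add_one hx.ne', log_mul hx.ne' (Gamma_pos_of_pos hx).ne', add_comm]

lemma psi_add_one {x : ℝ} (hx : 0 < x) : psi (x + 1) = psi x + x⁻¹ := by
  have h : (fun y => log (Gamma (y + 1))) =ᶠ[𝓝 x] fun y => log (Gamma y) + log y := by
    filter_upwards [eventually_gt_nhds hx] with y hy using log_Gamma_add_one hy
  have := h.deriv_eq
  rwa [deriv_comp_add_const (f := fun y => log (Gamma y)),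
    deriv_fun_add (differentiableAt_log_Gamma hx) (differentiableAt_log hx.ne'), deriv_log] at this

lemma psi_add_nat {x : ℝ} (hx : 0 < x) (n : ℕ) :
    psi (x + n) = psi x + ∑ k ∈ Finset.range n, (x + k)⁻¹ := by
  induction n with
  | zero => simp
  | succ n ih =>
    rw [Nat.cast_succ, ← add_assoc, psi_add_one (by positivity), ih, Finset.sum_range_succ,
      add_assoc]

lemma log_le_psi_add_one {x : ℝ} (hx : 0 < x) : log x ≤ psi (x + 1) := by
  have h := convexOn_log_Gamma.slope_le_deriv (mem_Ioi.2 hx) (mem_Ioi.2 (by linarith : 0 < x + 1))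
    (lt_add_one x) (differentiableAt_log_Gamma (by linarith))
  rwa [slope_def_field, Function.comp_apply, Function.comp_apply, log_Gamma_add_one hx,
    add_sub_cancel_left, add_sub_cancel_left, div_one] at h

lemma psi_add_one_le_log {x : ℝ} (hx : 0 < x) : psi (x + 1) ≤ log (x + 1) := by
  have h := convexOn_log_Gamma.deriv_le_slope (mem_Ioi.2 (by linarith : 0 < x + 1))
    (mem_Ioi.2 (by linarith : 0 < x + 1 + 1)) (lt_add_one _)
    (differentiableAt_log_Gamma (by linarith))
  rwa [slope_def_field, Function.comp_apply, Function.comp_apply,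
    log_Gamma_add_one (by linarith : 0 < x + 1), add_sub_cancel_left, add_sub_cancel_left,
    div_one] at h

lemma tendsto_psi_add_sub_log (a : ℝ) :
    Tendsto (fun y => psi (y + a) - log y) atTop (𝓝 0) := by
  refine tendsto_of_tendsto_of_tendsto_of_le_of_le' (tendsto_log_comp_add_sub_log (a - 1))
    (tendsto_log_comp_add_sub_log a) ?_ ?_ <;>
  filter_upwards [eventually_gt_atTop (1 - a)] with y hy
  · have := log_le_psi_add_one (by linarith : 0 < y + (a - 1))
    rw [show y + (a - 1) + 1 = y + a by ring] at this
    linarith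
  · have := psi_add_one_le_log (by linarith : 0 < y + (a - 1))
    rw [show y + (a - 1) + 1 = y + a by ring] at this
    linarith

lemma hasDerivAt_inv_succ_sub_inv_add (k : ℕ) {y : ℝ} (hy : 0 < y) :
    HasDerivAt (fun y : ℝ => ((k : ℝ) + 1)⁻¹ - (y + k)⁻¹) ((y + k) ^ 2)⁻¹ y := by
  simpa using ((hasDerivAt_inv (by positivity : y + k ≠ 0)).comp_add_const y (k : ℝ)).const_sub
    ((k : ℝ) + 1)⁻¹

lemma hasSum_psi {x : ℝ} (hx : 0 < x) :
    HasSum (fun k : ℕ => ((k : ℝ) + 1)⁻¹ - (x + k)⁻¹) (psi x - psi 1) := by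
  have hsummable := summable_of_abs_deriv_le_inv_add_pow (c := 1) one_lt_two
    (fun k y hy => hasDerivAt_inv_succ_sub_inv_add k hy)
    (fun k y hy => by rw [one_mul, abs_of_pos (by positivity)]) one_pos
    (by simp [add_comm]) hx
  refine hsummable.hasSum_iff_tendsto_nat.2 ?_
  have hlim := (((tendsto_psi_add_sub_log 1).sub (tendsto_psi_add_sub_log x)).comp
    tendsto_natCast_atTop_atTop).const_add (psi x - psi 1)
  rw [sub_zero, add_zero] at hlim
  refine hlim.congr fun n => ?_
  have h₁ := psi_add_nat one_pos n
  have hx' := psi_add_nat hx n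
  simp only [Function.comp_apply, Finset.sum_sub_distrib, add_comm (1 : ℝ)] at h₁ ⊢
  rw [add_comm x] at hx'
  linarith

lemma hasDerivAt_psi {x : ℝ} (hx : 0 < x) : HasDerivAt psi (∑' k : ℕ, ((x + k) ^ 2)⁻¹) x := by
  have hpsi : psi =ᶠ[𝓝 x] fun y => psi 1 + ∑' k : ℕ, (((k : ℝ) + 1)⁻¹ - (y + k)⁻¹) := by
    filter_upwards [eventually_gt_nhds hx] with y hy
    rw [(hasSum_psi hy).tsum_eq, add_sub_cancel]
  refine HasDerivAt.congr_of_eventuallyEq ?_ hpsi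
  exact (hasDerivAt_tsum_of_abs_deriv_le_inv_add_pow (c := 1) one_lt_two
    (fun k y hy => hasDerivAt_inv_succ_sub_inv_add k hy)
    (fun k y hy => by rw [one_mul, abs_of_pos (by positivity)]) one_pos
    (by simp [add_comm]) hx).const_add _

lemma hasDerivAt_deriv_psi {x : ℝ} (hx : 0 < x) :
    HasDerivAt (deriv psi) (-∑' k : ℕ, 2 * ((x + k) ^ 3)⁻¹) x := by
  have hpsi' : deriv psi =ᶠ[𝓝 x] fun y => ∑' k : ℕ, ((y + k) ^ 2)⁻¹ := by
    filter_upwards [eventually_gt_nhds hx] with y hy using (hasDerivAt_psi hy).deriv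
  refine HasDerivAt.congr_of_eventuallyEq ?_ hpsi'
  rw [← tsum_neg]
  exact hasDerivAt_tsum_of_abs_deriv_le_inv_add_pow (c := 2) (by norm_num : 1 < 3)
    (fun k y hy => hasDerivAt_inv_add_sq _ (by positivity))
    (fun k y hy => by rw [abs_neg, abs_of_pos (by positivity)]) hx
    (summable_inv_add_pow hx one_lt_two) hx

lemma sub_inv_sq_add_inv_cube_lt {t : ℝ} (ht : 0 < t) :
    (t ^ 2)⁻¹ + (t ^ 3)⁻¹ - (((t + 1) ^ 2)⁻¹ + ((t + 1) ^ 3)⁻¹) < 2 * (t ^ 3)⁻¹ := by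
  rw [← sub_pos]
  have key : 2 * (t ^ 3)⁻¹ - ((t ^ 2)⁻¹ + (t ^ 3)⁻¹ - (((t + 1) ^ 2)⁻¹ + ((t + 1) ^ 3)⁻¹))
      = (2 * t + 1) / (t ^ 3 * (t + 1) ^ 3) := by
    field_simp
    ring
  rw [key]
  positivity

lemma two_mul_inv_cube_lt_sub {t : ℝ} (ht : 0 < t) :
    2 * (t ^ 3)⁻¹ < (t ^ 2)⁻¹ + (t ^ 3)⁻¹ + (2 * t ^ 4)⁻¹ -
      (((t + 1) ^ 2)⁻¹ + ((t + 1) ^ 3)⁻¹ + (2 * (t + 1) ^ 4)⁻¹) := by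
  rw [← sub_pos]
  have key : (t ^ 2)⁻¹ + (t ^ 3)⁻¹ + (2 * t ^ 4)⁻¹ -
      (((t + 1) ^ 2)⁻¹ + ((t + 1) ^ 3)⁻¹ + (2 * (t + 1) ^ 4)⁻¹) - 2 * (t ^ 3)⁻¹
      = (2 * t + 1) / (2 * t ^ 4 * (t + 1) ^ 4) := by
    field_simp
    ring
  rw [key]
  positivity

lemma inv_sq_add_inv_cube_lt_tsum {x : ℝ} (hx : 0 < x) :
    (x ^ 2)⁻¹ + (x ^ 3)⁻¹ < ∑' k : ℕ, 2 * ((x + k) ^ 3)⁻¹ := by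
  have h := lt_tsum_of_sub_succ_lt (u := fun k : ℕ => ((x + k) ^ 2)⁻¹ + ((x + k) ^ 3)⁻¹)
    (by simpa using (tendsto_inv_add_pow x two_ne_zero).add (tendsto_inv_add_pow x three_ne_zero))
    ((summable_inv_add_pow hx (by norm_num : 1 < 3)).mul_left 2)
    fun k => by
      simpa only [Nat.cast_succ, add_assoc] using
        sub_inv_sq_add_inv_cube_lt (by positivity : 0 < x + k)
  simpa using h

lemma tsum_lt_inv_sq_add_inv_cube_add {x : ℝ} (hx : 0 < x) :
    ∑' k : ℕ, 2 * ((x + k) ^ 3)⁻¹ < (x ^ 2)⁻¹ + (x ^ 3)⁻¹ + (2 * x ^ 4)⁻¹ := by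
  have hu : Tendsto (fun k : ℕ => ((x + k) ^ 2)⁻¹ + ((x + k) ^ 3)⁻¹ + (2 * (x + k) ^ 4)⁻¹)
      atTop (𝓝 0) := by
    have h4 := (tendsto_inv_add_pow x four_ne_zero).const_mul 2⁻¹
    simpa [mul_comm] using ((tendsto_inv_add_pow x two_ne_zero).add
      (tendsto_inv_add_pow x three_ne_zero)).add h4
  have h := tsum_lt_of_lt_sub_succ hu
    ((summable_inv_add_pow hx (by norm_num : 1 < 3)).mul_left 2)
    fun k => by
      simpa only [Nat.cast_succ, add_assoc] using
        two_mul_inv_cube_lt_sub (by positivity : 0 < x + k)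
  simpa using h

theorem tetragamma_bounds (x : ℝ) (hx : 0 < x) :
    -(1 / x ^ 2) - 1 / x ^ 3 - 1 / (2 * x ^ 4) < deriv (deriv psi) x ∧
    deriv (deriv psi) x < -(1 / x ^ 2) - 1 / x ^ 3 := by
  rw [(hasDerivAt_deriv_psi hx).deriv]
  have hlower := inv_sq_add_inv_cube_lt_tsum hx
  have hupper := tsum_lt_inv_sq_add_inv_cube_add hx
  simp only [one_div]
  constructor <;> linarith
end
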